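/- arXiv:1401.8286 — 6 statements merged into one kernel-verified Lean document; each statement's English description precedes it below -/
import Mathlib

section
/- Let Ψ: ℝ^m → ℝ^p be a smooth map with p ≥ 2, radial weighted homogeneous of degree d > 0 with positive weights q₁,...,q_m, and suppose every critical point of Ψ lies in V = Ψ⁻¹(0). Then for every x ∉ V, the Euler vector field direction γ(x) = (q₁x₁,...,q_m x_m) is tangent to the fiber of Ψ/‖Ψ‖ through x but not tangent to the sphere through x, i.e. ⟨γ(x), Ψᵢ(x)·grad Ψⱼ(x) − Ψⱼ(x)·grad Ψᵢ(x)⟩ = 0 for all i < j, while ⟨γ(x), x⟩ > 0. -/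
/-- For a smooth radial weighted homogeneous map `Ψ : ℝ^m → ℝ^p` (`p ≥ 2`)
of degree `d > 0` with positive weights, whose critical points all lie in `V = Ψ⁻¹(0)`,
the Euler vector field `γ(x)` is tangent to the fibers of `Ψ/‖Ψ‖` at every `x ∉ V`
(`⟨γ(x), Ψᵢ(x)·grad Ψⱼ(x) − Ψⱼ(x)·grad Ψᵢ(x)⟩ = 0` for `i < j`) but not tangent to the
sphere through `x` (`⟨γ(x), x⟩ > 0`). -/
theorem euler_field_tangent_to_fibers_not_to_spheres
    (m p : ℕ) (hp : 2 ≤ p) (Ψ : Fin p → EuclideanSpace ℝ (Fin m) → ℝ)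
    (hsmooth : ∀ i, ContDiff ℝ (⊤ : ℕ∞) (Ψ i))
    (q : Fin m → ℕ) (hq : ∀ j, 0 < q j) (d : ℕ) (hd : 0 < d)
    (hhom : ∀ i, ∀ ρ : ℝ, 0 < ρ → ∀ x : EuclideanSpace ℝ (Fin m),
      Ψ i (WithLp.toLp 2 (fun j => ρ ^ q j * x j)) = ρ ^ d * Ψ i x)
    (hsing : ∀ x : EuclideanSpace ℝ (Fin m),
      ¬ LinearIndependent ℝ (fun i => gradient (Ψ i) x) → ∀ i, Ψ i x = 0) :
    ∀ x : EuclideanSpace ℝ (Fin m), (∃ i, Ψ i x ≠ 0) →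
      (∀ i j : Fin p, i < j →
        (inner ℝ (show EuclideanSpace ℝ (Fin m) from WithLp.toLp 2 (fun l => (q l : ℝ) * x l))
          (Ψ i x • gradient (Ψ j) x - Ψ j x • gradient (Ψ i) x) : ℝ) = 0) ∧
      0 < (inner ℝ (show EuclideanSpace ℝ (Fin m) from WithLp.toLp 2 (fun l => (q l : ℝ) * x l)) x : ℝ) := by
  intro x hx
  set γ : EuclideanSpace ℝ (Fin m) := WithLp.toLp 2 (fun l => (q l : ℝ) * x l) with hγ
  -- the curve ρ ↦ (ρ^{q_j} x_j) has derivative γ at ρ = 1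
  have hc : HasDerivAt (fun ρ : ℝ => (show EuclideanSpace ℝ (Fin m) from WithLp.toLp 2 (fun j => ρ ^ q j * x j)))
      γ 1 := by
    have h : HasDerivAt (fun ρ : ℝ => (fun j => ρ ^ q j * x j : ∀ _ : Fin m, ℝ))
        (fun l => (q l : ℝ) * x l) 1 := by
      rw [hasDerivAt_pi]
      intro j
      simpa using (hasDerivAt_pow (q j) (1:ℝ)).mul_const (x j)
    exact ((PiLp.continuousLinearEquiv 2 ℝ (fun _ : Fin m => ℝ)).symm.hasFDerivAt.comp_hasDerivAt
      1 h :)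
  have hc1 : (show EuclideanSpace ℝ (Fin m) from WithLp.toLp 2 (fun j => (1:ℝ) ^ q j * x j)) = x := by
    ext j; simp
  -- Euler identity
  have key : ∀ i, (inner ℝ γ (gradient (Ψ i) x) : ℝ) = (d : ℝ) * Ψ i x := by
    intro i
    have hdiff : DifferentiableAt ℝ (Ψ i) x := ((hsmooth i).differentiable (by simp)).differentiableAt
    have hΨ : HasFDerivAt (Ψ i) (fderiv ℝ (Ψ i) x) x := hdiff.hasFDerivAt
    have hcomp : HasDerivAt (fun ρ : ℝ => Ψ i (WithLp.toLp 2 (fun j => ρ ^ q j * x j)))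
        (fderiv ℝ (Ψ i) x γ) 1 := by
      have hΨ1 : HasFDerivAt (Ψ i) (fderiv ℝ (Ψ i) x)
          (show EuclideanSpace ℝ (Fin m) from WithLp.toLp 2 (fun j => (1:ℝ) ^ q j * x j)) := by
        rw [hc1]; exact hΨ
      exact hΨ1.comp_hasDerivAt 1 hc
    have h2 : HasDerivAt (fun ρ : ℝ => ρ ^ d * Ψ i x) ((d : ℝ) * Ψ i x) 1 := by
      simpa using (hasDerivAt_pow d (1:ℝ)).mul_const (Ψ i x)
    have heq : (fun ρ : ℝ => Ψ i (WithLp.toLp 2 (fun j => ρ ^ q j * x j))) =ᶠ[nhds 1]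
        (fun ρ : ℝ => ρ ^ d * Ψ i x) := by
      filter_upwards [isOpen_Ioi.mem_nhds (by norm_num : (1:ℝ) ∈ Set.Ioi (0:ℝ))] with ρ hρ
      exact hhom i ρ hρ x
    have hcomp' : HasDerivAt (fun ρ : ℝ => ρ ^ d * Ψ i x) (fderiv ℝ (Ψ i) x γ) 1 :=
      hcomp.congr_of_eventuallyEq heq.symm
    have huniq : fderiv ℝ (Ψ i) x γ = (d : ℝ) * Ψ i x := hcomp'.unique h2
    have hgrad : fderiv ℝ (Ψ i) x γ = inner ℝ (gradient (Ψ i) x) γ := by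
      rw [hdiff.hasGradientAt.hasFDerivAt.fderiv]
      simp [InnerProductSpace.toDual_apply_apply]
    rw [real_inner_comm, ← hgrad, huniq]
  constructor
  · intro i j _
    rw [inner_sub_right, inner_smul_right, inner_smul_right, key i, key j]
    ring
  · -- x ≠ 0
    have hx0 : x ≠ 0 := by
      rintro rfl
      obtain ⟨i, hi⟩ := hx
      have h0 : ∀ j, (2:ℝ) ^ q j * (0 : EuclideanSpace ℝ (Fin m)) j = (0 : ℝ) := by
        intro j; simp
      have := hhom i 2 (by norm_num) 0
      rw [show WithLp.toLp 2 (fun j => (2:ℝ) ^ q j * (0 : EuclideanSpace ℝ (Fin m)) j)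
          = (0 : EuclideanSpace ℝ (Fin m)) from by ext j; exact h0 j] at this
      have h2d : (1:ℝ) < 2 ^ d := one_lt_pow₀ (by norm_num) hd.ne'
      refine hi ?_
      rcases mul_eq_zero.mp (show Ψ i (0 : EuclideanSpace ℝ (Fin m)) * ((2:ℝ) ^ d - 1) = 0 by
        nlinarith [this]) with h | h
      · exact h
      · linarith
    obtain ⟨l, hl⟩ : ∃ l, x l ≠ 0 := by
      by_contra h
      push_neg at h
      exact hx0 (by ext j; exact h j)
    rw [PiLp.inner_apply]
    refine Finset.sum_pos' (fun k _ => ?_) ⟨l, Finset.mem_univ l, ?_⟩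
    · have : (0:ℝ) ≤ (q k : ℝ) * (x k * x k) :=
        mul_nonneg (Nat.cast_nonneg _) (mul_self_nonneg _)
      simpa [hγ, mul_assoc, mul_left_comm] using this
    · have : (0:ℝ) < (q l : ℝ) * (x l * x l) :=
        mul_pos (by exact_mod_cast hq l) (mul_self_pos.mpr hl)
      simpa [hγ, mul_assoc, mul_left_comm] using this
end

section
/- Let Ψ: ℝ^m → ℝ^p (p ≥ 2) be radial weighted homogeneous of positive degree with positive weights, and suppose Sing Ψ ⊆ V := Ψ⁻¹(0). Then the Milnor set M(Ψ/‖Ψ‖) := { x ∈ ℝ^m \ V : the restriction of Ψ/‖Ψ‖ to the sphere of radius ‖x‖ through x is not submersive at x } is empty (hence in particular bounded). -/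
open scoped RealInnerProductSpace


/-- For a radial weighted homogeneous map `Ψ : ℝ^m → ℝ^p` (`p ≥ 2`) of positive
degree with positive weights and `Sing Ψ ⊆ V = Ψ⁻¹(0)`, the Milnor set `M(Ψ/‖Ψ‖)` — the set
of points `x ∉ V` at which the restriction of `Ψ/‖Ψ‖` to the sphere of radius `‖x‖` is not
submersive (i.e. the tangent space of the sphere at `x` is not mapped onto the tangent space
of `S^{p−1}` at `Ψ(x)/‖Ψ(x)‖` by the derivative) — is empty, hence bounded. -/
theorem milnor_set_of_sphere_map_empty_for_radial_homogeneous
    (m p : ℕ) (hp : 2 ≤ p) (Ψ : EuclideanSpace ℝ (Fin m) → EuclideanSpace ℝ (Fin p))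
    (hsmooth : ContDiff ℝ (⊤ : ℕ∞) Ψ)
    (q : Fin m → ℕ) (hq : ∀ j, 0 < q j) (d : ℕ) (hd : 0 < d)
    (hhom : ∀ ρ : ℝ, 0 < ρ → ∀ x : EuclideanSpace ℝ (Fin m),
      Ψ (WithLp.toLp 2 (fun j => ρ ^ q j * x j)) = ρ ^ d • Ψ x)
    (hsing : ∀ x, ¬ Function.Surjective (fderiv ℝ Ψ x) → Ψ x = 0) :
    {x : EuclideanSpace ℝ (Fin m) | Ψ x ≠ 0 ∧
      ¬ ((Submodule.span ℝ {‖Ψ x‖⁻¹ • Ψ x})ᗮ ≤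
          Submodule.map (fderiv ℝ (fun y => ‖Ψ y‖⁻¹ • Ψ y) x).toLinearMap
            (Submodule.span ℝ {x})ᗮ)} = ∅ := by
  rw [Set.eq_empty_iff_forall_notMem]
  rintro x ⟨hx, hP⟩
  apply hP
  have hdiff : Differentiable ℝ Ψ := hsmooth.differentiable (by simp)
  set F := fderiv ℝ Ψ x with hFdef
  have hFx : HasFDerivAt Ψ F x := (hdiff x).hasFDerivAt
  have hn0 : ‖Ψ x‖ ≠ 0 := norm_ne_zero_iff.mpr hx
  -- Ψ 0 = 0, hence x ≠ 0
  have hzero : Ψ 0 = 0 := by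
    have h2 := hhom 2 (by norm_num) 0
    have harg : WithLp.toLp 2 (fun j => (2:ℝ) ^ q j * (0 : EuclideanSpace ℝ (Fin m)) j)
        = (0 : EuclideanSpace ℝ (Fin m)) := by
      ext j; simp
    rw [harg] at h2
    have hc : ((1:ℝ) - 2 ^ d) • Ψ 0 = 0 := by
      rw [sub_smul, one_smul]
      rw [h2]; simp [← h2]
    have hne : ((1:ℝ) - 2 ^ d) ≠ 0 := by
      have h : (1:ℝ) < 2 ^ d := one_lt_pow₀ (by norm_num) hd.ne'
      exact sub_ne_zero.mpr (ne_of_lt h)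
    exact (smul_eq_zero.mp hc).resolve_left hne
  have hx0 : x ≠ 0 := fun h => hx (h ▸ hzero)
  -- Euler vector field
  set Ex : EuclideanSpace ℝ (Fin m) := WithLp.toLp 2 (fun j => (q j : ℝ) * x j) with hExdef
  have hγ₀ : HasDerivAt (fun ρ : ℝ => (fun j => ρ ^ q j * x j : Fin m → ℝ))
      (fun j => (q j : ℝ) * x j) 1 :=
    hasDerivAt_pi.2 fun j => by
      simpa using (hasDerivAt_pow (q j) 1).mul_const (x j)
  have hcomp : HasDerivAt (fun ρ : ℝ => Ψ (WithLp.toLp 2 (fun j => ρ ^ q j * x j))) (F Ex) 1 := by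
    set L : (Fin m → ℝ) →L[ℝ] EuclideanSpace ℝ (Fin m) :=
      (EuclideanSpace.equiv (Fin m) ℝ).symm.toContinuousLinearMap with hLdef
    have h1 : L (fun j => (1:ℝ) ^ q j * x j) = x := by
      ext j; simp [hLdef]
    have hFx' : HasFDerivAt Ψ F (L (fun j => (1:ℝ) ^ q j * x j)) := by rwa [h1]
    have hΨL : HasFDerivAt (fun z : Fin m → ℝ => Ψ (L z)) (F.comp L)
        (fun j => (1:ℝ) ^ q j * x j) := hFx'.comp _ L.hasFDerivAt
    have hc := hΨL.comp_hasDerivAt 1 hγ₀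
    have h2 : (F.comp L) (fun j => (q j : ℝ) * x j) = F Ex := rfl
    rw [h2] at hc
    exact hc
  have heq : (fun ρ : ℝ => Ψ (WithLp.toLp 2 (fun j => ρ ^ q j * x j)))
      =ᶠ[nhds (1:ℝ)] (fun ρ => ρ ^ d • Ψ x) := by
    filter_upwards [eventually_gt_nhds (zero_lt_one)] with ρ hρ
    exact hhom ρ hρ x
  have hR : HasDerivAt (fun ρ : ℝ => ρ ^ d • Ψ x) ((d:ℝ) • Ψ x) 1 := by
    simpa using (hasDerivAt_pow d (1:ℝ)).smul_const (Ψ x)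
  have hEuler : F Ex = (d : ℝ) • Ψ x :=
    (hcomp.congr_of_eventuallyEq heq.symm).unique hR
  -- surjectivity of F
  have hsurj : Function.Surjective F := by
    by_contra h
    exact hx (hsing x (hFdef ▸ h))
  -- derivative of the norm
  have hsq : HasFDerivAt (fun y => ‖Ψ y‖ ^ 2) (2 • ((innerSL ℝ (Ψ x)).comp F)) x := hFx.norm_sq
  have hs : HasDerivAt Real.sqrt (1 / (2 * Real.sqrt (‖Ψ x‖^2))) (‖Ψ x‖^2) :=
    Real.hasDerivAt_sqrt (by positivity)
  have hnorm : HasFDerivAt (fun y => ‖Ψ y‖)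
      ((1 / (2 * ‖Ψ x‖)) • (2 • ((innerSL ℝ (Ψ x)).comp F) : _ →L[ℝ] ℝ)) x := by
    have h' := hs.comp_hasFDerivAt x hsq
    simp only [Function.comp_def] at h'
    have he : (fun y => Real.sqrt (‖Ψ y‖^2)) = fun y => ‖Ψ y‖ :=
      funext fun y => Real.sqrt_sq (norm_nonneg _)
    rw [he] at h'
    rwa [Real.sqrt_sq (norm_nonneg _)] at h'
  have hinv : HasFDerivAt (fun y => ‖Ψ y‖⁻¹)
      ((-(‖Ψ x‖^2)⁻¹) • ((1 / (2 * ‖Ψ x‖)) • (2 • ((innerSL ℝ (Ψ x)).comp F) : _ →L[ℝ] ℝ))) x :=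
    (hasDerivAt_inv hn0).comp_hasFDerivAt x hnorm
  set D : EuclideanSpace ℝ (Fin m) →L[ℝ] EuclideanSpace ℝ (Fin p) :=
    ‖Ψ x‖⁻¹ • F + ((-(‖Ψ x‖^2)⁻¹) • ((1 / (2 * ‖Ψ x‖)) •
        (2 • ((innerSL ℝ (Ψ x)).comp F) : _ →L[ℝ] ℝ))).smulRight (Ψ x) with hDdef
  have hf : HasFDerivAt (fun y => ‖Ψ y‖⁻¹ • Ψ y) D x := hinv.smul hFx
  have hDapply : ∀ v, D v = ‖Ψ x‖⁻¹ • F v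
      + ((-(‖Ψ x‖^2)⁻¹) * ((‖Ψ x‖)⁻¹ * ⟪Ψ x, F v⟫)) • Ψ x := by
    intro v
    simp only [hDdef, ContinuousLinearMap.add_apply, ContinuousLinearMap.smul_apply,
      ContinuousLinearMap.smulRight_apply, ContinuousLinearMap.comp_apply, innerSL_apply_apply,
      smul_eq_mul]
    congr 2
    field_simp
    ring
  have hDEx : D Ex = 0 := by
    rw [hDapply, hEuler]
    rw [real_inner_smul_right, real_inner_self_eq_norm_sq]
    rw [smul_smul, ← add_smul]
    convert zero_smul ℝ (Ψ x)
    field_simp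
    ring
  -- positivity of ⟪x, Ex⟫
  have hxEx : (0:ℝ) < ⟪x, Ex⟫ := by
    obtain ⟨j₀, hj₀⟩ : ∃ j, x j ≠ 0 := by
      by_contra h
      push_neg at h
      exact hx0 (by ext j; exact h j)
    have : ⟪x, Ex⟫ = ∑ j, (q j : ℝ) * x j ^ 2 := by
      simp [hExdef, PiLp.inner_apply, RCLike.inner_apply]
      congr 1; funext j; ring
    rw [this]
    refine Finset.sum_pos' (fun j _ => by positivity) ⟨j₀, Finset.mem_univ _, ?_⟩
    have h1 : (0:ℝ) < x j₀ ^ 2 := by positivity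
    have h2 : (0:ℝ) < (q j₀ : ℝ) := by exact_mod_cast hq j₀
    positivity
  -- main inclusion
  intro w hw
  have hwΨ : ⟪Ψ x, w⟫ = 0 := by
    have := Submodule.mem_orthogonal_singleton_iff_inner_right.mp hw
    rw [real_inner_smul_left] at this
    rcases mul_eq_zero.mp this with h | h
    · exact absurd h (inv_ne_zero hn0)
    · exact h
  obtain ⟨v₀, hv₀⟩ := hsurj (‖Ψ x‖ • w)
  have hDv₀ : D v₀ = w := by
    rw [hDapply, hv₀, real_inner_smul_right, hwΨ]
    simp [smul_smul, hn0]
  set c : ℝ := ⟪x, v₀⟫ / ⟪x, Ex⟫ with hc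
  refine ⟨v₀ - c • Ex, ?_, ?_⟩
  · show v₀ - c • Ex ∈ (Submodule.span ℝ {x})ᗮ
    rw [Submodule.mem_orthogonal_singleton_iff_inner_right]
    rw [inner_sub_right, real_inner_smul_right, hc,
      div_mul_cancel₀ _ (ne_of_gt hxEx), sub_self]
  · have : fderiv ℝ (fun y => ‖Ψ y‖⁻¹ • Ψ y) x = D := hf.fderiv
    rw [this]
    show D (v₀ - c • Ex) = w
    rw [map_sub, map_smul, hDv₀, hDEx, smul_zero, sub_zero]
end

section
/- For any analytic map Ψ: U → ℝ^p on an open set U ⊆ ℝ^m with V = Ψ⁻¹(0), the Milnor set of the sphere-valued map satisfies M(Ψ/‖Ψ‖) ⊆ M(Ψ) \ V, where M(Ψ) is the set of non-transversality between the Euclidean distance function ρ and Ψ, and M(Ψ/‖Ψ‖) is the analogous set for Ψ/‖Ψ‖: U \ V → S^{p−1}. -/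
/-! Along a direction `v` with `DΨ(x) v ⟂ Ψ(x)` the factor `‖Ψ‖⁻¹` is stationary, so there
`D(Ψ/‖Ψ‖)(x) v = ‖Ψ x‖⁻¹ • DΨ(x) v`. If `DΨ(x)` maps the tangent space of the sphere through `x`
onto `ℝ^p`, every `w ⟂ Ψ x` is `DΨ(x) v / ‖Ψ x‖` for such a tangent `v`, hence is hit by
`D(Ψ/‖Ψ‖)(x)`: transversality of `Ψ` at `x ∉ V` gives transversality of `Ψ/‖Ψ‖`. -/

open RealInnerProductSpace

section Normalize

variable {E F : Type*} [NormedAddCommGroup E] [NormedSpace ℝ E]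
  [NormedAddCommGroup F] [InnerProductSpace ℝ F] {f : E → F} {x : E}

theorem fderiv_norm_apply_of_ne_zero (hf : DifferentiableAt ℝ f x) (hx : f x ≠ 0) (v : E) :
    fderiv ℝ (fun y => ‖f y‖) x v = ‖f x‖⁻¹ * ⟪f x, fderiv ℝ f x v⟫ := by
  have hnorm : DifferentiableAt ℝ (fun y => ‖f y‖) x := hf.norm ℝ hx
  -- compute the derivative of `‖f‖ ^ 2` once as `2 ⟪f, Df⟫` and once by the chain rule
  have hsq := congrArg (· v) (hf.hasFDerivAt.norm_sq.fderiv.symm.trans (fderiv_pow 2 hnorm))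
  simp only [smul_apply, ContinuousLinearMap.comp_apply, coe_innerSL_apply,
    nsmul_eq_mul, Nat.cast_ofNat, Nat.add_one_sub_one, pow_one, smul_eq_mul] at hsq
  field_simp
  linarith

theorem fderiv_inv_norm_smul_apply_of_inner_eq_zero (hf : DifferentiableAt ℝ f x)
    (hx : f x ≠ 0) {v : E} (hv : ⟪f x, fderiv ℝ f x v⟫ = 0) :
    fderiv ℝ (fun y => ‖f y‖⁻¹ • f y) x v = ‖f x‖⁻¹ • fderiv ℝ f x v := by
  have hnorm : DifferentiableAt ℝ (fun y => ‖f y‖) x := hf.norm ℝ hx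
  have hnx : ‖f x‖ ≠ 0 := norm_ne_zero_iff.mpr hx
  have hinv : fderiv ℝ (fun y => ‖f y‖⁻¹) x v = 0 := by
    rw [fderiv_fun_comp x (differentiableAt_inv hnx) hnorm, ContinuousLinearMap.comp_apply,
      fderiv_norm_apply_of_ne_zero hf hx, hv, mul_zero, map_zero]
  rw [fderiv_fun_smul (c := fun y => ‖f y‖⁻¹) (hnorm.inv hnx) hf]
  simp [hinv]

theorem orthogonal_le_map_fderiv_inv_norm_smul (hf : DifferentiableAt ℝ f x) (hx : f x ≠ 0)
    {K : Submodule ℝ E} (hK : ⊤ ≤ K.map (fderiv ℝ f x).toLinearMap) :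
    (ℝ ∙ (‖f x‖⁻¹ • f x))ᗮ ≤ K.map (fderiv ℝ (fun y => ‖f y‖⁻¹ • f y) x).toLinearMap := by
  have hnx : ‖f x‖ ≠ 0 := norm_ne_zero_iff.mpr hx
  rw [Submodule.span_singleton_smul_eq (inv_ne_zero hnx).isUnit]
  intro w hw
  have hw : ⟪f x, w⟫ = 0 := Submodule.mem_orthogonal_singleton_iff_inner_right.mp hw
  obtain ⟨v, hvK, hv⟩ := hK (Submodule.mem_top (x := ‖f x‖ • w))
  have hv : fderiv ℝ f x v = ‖f x‖ • w := hv
  have hv_perp : ⟪f x, fderiv ℝ f x v⟫ = 0 := by rw [hv, inner_smul_right, hw, mul_zero]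
  refine ⟨v, hvK, ?_⟩
  change fderiv ℝ (fun y => ‖f y‖⁻¹ • f y) x v = w
  rw [fderiv_inv_norm_smul_apply_of_inner_eq_zero hf hx hv_perp, hv, inv_smul_smul₀ hnx]

end Normalize

theorem milnor_set_sphere_map_subset_milnor_set_general
    (m p : ℕ) (U : Set (EuclideanSpace ℝ (Fin m)))
    (Ψ : EuclideanSpace ℝ (Fin m) → EuclideanSpace ℝ (Fin p))
    (hΨ : AnalyticOnNhd ℝ Ψ U) :
    {x ∈ U | Ψ x ≠ 0 ∧
      ¬ ((Submodule.span ℝ {‖Ψ x‖⁻¹ • Ψ x})ᗮ ≤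
          Submodule.map (fderiv ℝ (fun y => ‖Ψ y‖⁻¹ • Ψ y) x).toLinearMap
            (Submodule.span ℝ {x})ᗮ)} ⊆
    ({x ∈ U | ¬ (⊤ ≤ Submodule.map (fderiv ℝ Ψ x).toLinearMap (Submodule.span ℝ {x})ᗮ)} \
      {x | Ψ x = 0}) := by
  rintro x ⟨hxU, hΨx, hnot_transverse⟩
  refine ⟨⟨hxU, fun htransverse => hnot_transverse ?_⟩, hΨx⟩
  exact orthogonal_le_map_fderiv_inv_norm_smul (hΨ x hxU).differentiableAt hΨx htransverse

/-- For an analytic map `Ψ : U → ℝ^p` on an open set `U ⊆ ℝ^m` with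
`V = Ψ⁻¹(0)`, the Milnor set of the sphere-valued map satisfies
`M(Ψ/‖Ψ‖) ⊆ M(Ψ) \ V`. Here `x ∈ M(Ψ)` iff the derivative of `Ψ` restricted to the
tangent space of the sphere through `x` is not surjective onto `ℝ^p`, and
`x ∈ M(Ψ/‖Ψ‖)` iff `Ψ x ≠ 0` and the derivative of `Ψ/‖Ψ‖` restricted to the tangent
space of the sphere through `x` does not cover the tangent space of `S^{p−1}`. -/
theorem milnor_set_sphere_map_subset_milnor_set
    (m p : ℕ) (U : Set (EuclideanSpace ℝ (Fin m))) (hU : IsOpen U)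
    (Ψ : EuclideanSpace ℝ (Fin m) → EuclideanSpace ℝ (Fin p))
    (hΨ : AnalyticOnNhd ℝ Ψ U) :
    {x ∈ U | Ψ x ≠ 0 ∧
      ¬ ((Submodule.span ℝ {‖Ψ x‖⁻¹ • Ψ x})ᗮ ≤
          Submodule.map (fderiv ℝ (fun y => ‖Ψ y‖⁻¹ • Ψ y) x).toLinearMap
            (Submodule.span ℝ {x})ᗮ)} ⊆
    ({x ∈ U | ¬ (⊤ ≤ Submodule.map (fderiv ℝ Ψ x).toLinearMap (Submodule.span ℝ {x})ᗮ)} \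
      {x | Ψ x = 0}) :=
  milnor_set_sphere_map_subset_milnor_set_general m p U Ψ hΨ
end

section
/- Let f(x,y) = y(2x²y² − 9xy + 12) be the first component of Ψ: ℝ³ → ℝ², Ψ(x,y,z) = (f(x,y), z). Then the Milnor set M(Ψ) = { (x,y,z) : 4xy⁴ − 9y³ − 6x³y² + 18x²y − 12x = 0 } is unbounded; in particular there exists a sequence (x_n, y_n, z) in M(Ψ) with x_n → ∞ and x_n y_n → 1. -/
/-!
Writing `y = u / x`, the Milnor equation becomes `6 x⁴ (u - 1)(2 - u) = u³ (9 - 4u)`, so for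
each `u ∈ (1, 2)` the point `(x, u / x, z)` with `x⁴ = u³ (9 - 4u) / (6 (u - 1)(2 - u))` lies in
`M(Ψ)`. Along this curve `x y = u`, and `x → ∞` as `u → 1⁺` because the denominator vanishes
while the numerator tends to `5`.
-/

open Filter Topology Bornology

theorem not_isBounded_of_tendsto_fst_atTop {ι β : Type*} [Bornology β] {l : Filter ι} [l.NeBot]
    {s : Set (ℝ × β)} {f : ι → ℝ × β} (hs : ∀ᶠ i in l, f i ∈ s)
    (hf : Tendsto (fun i => (f i).1) l atTop) : ¬ IsBounded s := by
  intro hb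
  have hcob : Tendsto f l (cobounded (ℝ × β)) := by
    rw [cobounded_prod]
    exact (tendsto_comap_iff.2 (hf.mono_right IsOrderBornology.atTop_le_cobounded)).mono_right
      le_sup_left
  obtain ⟨i, his, hic⟩ := (hs.and (hcob hb)).exists
  exact hic his

-- `x ∂f/∂y - y ∂f/∂x` for `f = y (2x²y² - 9xy + 12)`
def milnorPoly (x y : ℝ) : ℝ :=
  4 * x * y ^ 4 - 9 * y ^ 3 - 6 * x ^ 3 * y ^ 2 + 18 * x ^ 2 * y - 12 * x

theorem milnorPoly_div (u : ℝ) {x : ℝ} (hx : x ≠ 0) :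
    x ^ 3 * milnorPoly x (u / x) = u ^ 3 * (4 * u - 9) - 6 * x ^ 4 * ((u - 1) * (u - 2)) := by
  unfold milnorPoly; field_simp; ring

noncomputable def milnorCurveX4 (u : ℝ) : ℝ := u ^ 3 * (9 - 4 * u) / (6 * ((u - 1) * (2 - u)))

noncomputable def milnorCurveX (u : ℝ) : ℝ := milnorCurveX4 u ^ (1 / 4 : ℝ)

theorem milnorCurveX4_pos {u : ℝ} (hu : u ∈ Set.Ioo 1 2) : 0 < milnorCurveX4 u := by
  obtain ⟨h1, h2⟩ := hu
  unfold milnorCurveX4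
  have : 0 < u ^ 3 := by positivity
  apply div_pos <;> nlinarith

theorem milnorCurveX_pos {u : ℝ} (hu : u ∈ Set.Ioo 1 2) : 0 < milnorCurveX u :=
  Real.rpow_pos_of_pos (milnorCurveX4_pos hu) _

theorem milnorCurveX_pow_four {u : ℝ} (hu : u ∈ Set.Ioo 1 2) :
    milnorCurveX u ^ 4 = milnorCurveX4 u := by
  rw [milnorCurveX, ← Real.rpow_natCast, ← Real.rpow_mul (milnorCurveX4_pos hu).le]
  norm_num

theorem milnorPoly_milnorCurve {u : ℝ} (hu : u ∈ Set.Ioo 1 2) :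
    milnorPoly (milnorCurveX u) (u / milnorCurveX u) = 0 := by
  have hx := (milnorCurveX_pos hu).ne'
  have hden : 6 * ((u - 1) * (2 - u)) ≠ 0 := by nlinarith [hu.1, hu.2]
  have hx4 : milnorCurveX u ^ 4 * (6 * ((u - 1) * (2 - u))) = u ^ 3 * (9 - 4 * u) := by
    rw [milnorCurveX_pow_four hu, milnorCurveX4, div_mul_cancel₀ _ hden]
  refine (mul_eq_zero.1 ?_).resolve_left (pow_ne_zero 3 hx)
  rw [milnorPoly_div u hx]
  linear_combination hx4

theorem tendsto_milnorCurveX4 : Tendsto milnorCurveX4 (𝓝[>] 1) atTop := by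
  have hnum : Tendsto (fun u : ℝ => u ^ 3 * (9 - 4 * u)) (𝓝[>] 1) (𝓝 5) := by
    have h := (show Continuous (fun u : ℝ => u ^ 3 * (9 - 4 * u)) by fun_prop).tendsto 1
    norm_num at h
    exact tendsto_nhdsWithin_of_tendsto_nhds h
  have hden : Tendsto (fun u : ℝ => 6 * ((u - 1) * (2 - u))) (𝓝[>] 1) (𝓝[>] 0) := by
    refine tendsto_nhdsWithin_iff.2 ⟨?_, ?_⟩
    · have h := (show Continuous (fun u : ℝ => 6 * ((u - 1) * (2 - u))) by fun_prop).tendsto 1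
      norm_num at h
      exact tendsto_nhdsWithin_of_tendsto_nhds h
    · filter_upwards [Ioo_mem_nhdsGT one_lt_two] with u hu
      exact mul_pos (by norm_num) (mul_pos (sub_pos.2 hu.1) (sub_pos.2 hu.2))
  exact hnum.pos_mul_atTop (by norm_num) (tendsto_inv_nhdsGT_zero.comp hden)

theorem tendsto_milnorCurveX : Tendsto milnorCurveX (𝓝[>] 1) atTop :=
  (tendsto_rpow_atTop (by norm_num)).comp tendsto_milnorCurveX4

/-- For `Ψ(x,y,z) = (y(2x²y² − 9xy + 12), z) : ℝ³ → ℝ²`, the Milnor set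
`M(Ψ) = {(x,y,z) : 4xy⁴ − 9y³ − 6x³y² + 18x²y − 12x = 0}` is unbounded; in particular
there is a sequence `(xₙ, yₙ, z)` in `M(Ψ)` with `xₙ → ∞` and `xₙyₙ → 1`. -/
theorem milnor_set_of_TZ_example_unbounded :
    ¬ Bornology.IsBounded {P : ℝ × ℝ × ℝ |
        4 * P.1 * P.2.1 ^ 4 - 9 * P.2.1 ^ 3 - 6 * P.1 ^ 3 * P.2.1 ^ 2
          + 18 * P.1 ^ 2 * P.2.1 - 12 * P.1 = 0} ∧
    ∃ (x y : ℕ → ℝ) (z : ℝ),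
      (∀ n, 4 * x n * (y n) ^ 4 - 9 * (y n) ^ 3 - 6 * (x n) ^ 3 * (y n) ^ 2
          + 18 * (x n) ^ 2 * y n - 12 * x n = 0) ∧
      Tendsto x atTop atTop ∧
      Tendsto (fun n => x n * y n) atTop (nhds 1) := by
  obtain ⟨u, -, hu, hu_lim⟩ := exists_seq_strictAnti_tendsto' (one_lt_two : (1 : ℝ) < 2)
  set x := fun n => milnorCurveX (u n)
  set y := fun n => u n / x n
  have hmem (n : ℕ) : milnorPoly (x n) (y n) = 0 := milnorPoly_milnorCurve (hu n)
  have hx : Tendsto x atTop atTop :=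
    tendsto_milnorCurveX.comp (tendsto_nhdsWithin_iff.2 ⟨hu_lim, .of_forall fun n => (hu n).1⟩)
  have hxy : (fun n => x n * y n) = u :=
    funext fun n => mul_div_cancel₀ _ (milnorCurveX_pos (hu n)).ne'
  refine ⟨not_isBounded_of_tendsto_fst_atTop (f := fun n => (x n, y n, 0)) (.of_forall hmem) hx,
    x, y, 0, hmem, hx, hxy ▸ hu_lim⟩
end

section
/- Let f: ℂ² → ℂ be the mixed polynomial f(x,y) = x(1 + x̄y). Then f, viewed as a smooth map ℝ⁴ → ℝ², has empty singular set: the real derivative df(x,y) has rank 2 at every point of ℂ². -/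
/-! Since `f (x, y) = x + |x|² y`, for `x ≠ 0` already the derivative in the `y`-direction,
`v ↦ |x|² v`, is onto `ℂ`; at `x = 0` the derivative in the `x`-direction is the identity. -/

open ComplexConjugate

theorem fderiv_mul_one_add_conj_mul_apply (x y u v : ℂ) :
    fderiv ℝ (fun w : ℂ × ℂ => w.1 * (1 + conj w.1 * w.2)) (x, y) (u, v) =
      u * (1 + conj x * y) + x * (conj u * y + conj x * v) := by
  have hconj := (hasFDerivAt_fst (𝕜 := ℝ) (p := (x, y))).star
  have h : HasFDerivAt (fun w : ℂ × ℂ => w.1 * (1 + conj w.1 * w.2)) _ (x, y) :=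
    hasFDerivAt_fst.mul ((hconj.mul hasFDerivAt_snd).const_add 1)
  rw [h.fderiv]
  simp only [RCLike.star_def, smul_add, add_apply,
    smul_apply, ContinuousLinearMap.coe_snd', smul_eq_mul,
    ContinuousLinearMap.comp_apply, ContinuousLinearMap.coe_fst', ContinuousLinearEquiv.coe_coe,
    starL'_apply]
  ring

/-- The mixed polynomial `f(x,y) = x(1 + x̄y)`, viewed as a smooth real map
`ℝ⁴ ≅ ℂ² → ℂ ≅ ℝ²`, has empty singular set: its real derivative has rank 2 (i.e. is
surjective onto `ℂ`) at every point. -/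
theorem mixed_broughton_example_no_singularities :
    ∀ z : ℂ × ℂ,
      Function.Surjective
        (fderiv ℝ (fun w : ℂ × ℂ => w.1 * (1 + conj w.1 * w.2)) z) := by
  rintro ⟨x, y⟩ c
  by_cases hx : x = 0
  · exact ⟨(c, 0), by simp [fderiv_mul_one_add_conj_mul_apply, hx]⟩
  · have hx' : conj x ≠ 0 := (map_ne_zero _).2 hx
    refine ⟨(0, c / (x * conj x)), ?_⟩
    rw [fderiv_mul_one_add_conj_mul_apply, map_zero]
    field_simp
    ring
end

section
/- Let f(x,y) = x(1 + x̄y): ℂ² → ℂ. Then the set of asymptotic ρ-nonregular values S(f) is contained in {0}: for every sequence z_j in the Milnor set M(f) with ‖z_j‖ → ∞, if f(z_j) converges then its limit is 0. -/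
/-!
On the Milnor set the Lagrange multiplier `lam` cannot vanish, and the two equations force
`y = q x` with `q` real and `q = |x|² (1 - 2q²)`. Then `f(z) = x (1 + q|x|²)` and
`‖z‖ = |x| max(1, |q|)` (sup norm), and an elementary study of this one-parameter family shows
that at every point of the Milnor set either `‖z‖ ≤ 2|f(z)|` or `|f(z)| ‖z‖ ≤ 1`. Along a
sequence with `‖z_j‖ → ∞` and `f(z_j)` bounded the first alternative eventually fails, so
`|f(z_j)| ≤ 1/‖z_j‖ → 0`.
-/

open ComplexConjugate Filter Topology

theorem max_one_abs_le_or_mul_le_one {q u : ℝ} (hu : 0 ≤ u) (hq : q = u * (1 - 2 * q ^ 2)) :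
    max 1 |q| ≤ 2 * |1 + q * u| ∨ u * |1 + q * u| * max 1 |q| ≤ 1 := by
  rcases le_or_gt 0 q with hq0 | hq0
  · have hq1 : q ≤ 1 := by
      by_contra! h
      nlinarith [mul_nonneg hu (by nlinarith : (0:ℝ) ≤ 2 * q ^ 2 - 1)]
    left
    rw [abs_of_nonneg hq0, max_eq_left hq1, abs_of_nonneg (by positivity)]
    nlinarith [mul_nonneg hq0 hu]
  · have hd : 0 < 2 * q ^ 2 - 1 := by nlinarith
    have hu_eq : u = -q / (2 * q ^ 2 - 1) := by
      rw [eq_div_iff hd.ne']; linear_combination hq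
    have hB : 1 + q * u = (q ^ 2 - 1) / (2 * q ^ 2 - 1) := by
      rw [eq_div_iff hd.ne']; linear_combination q * hq
    rw [hB, hu_eq, abs_of_neg hq0, abs_div, abs_of_pos hd]
    rcases le_or_gt q (-1) with hq1 | hq1
    · right
      rw [max_eq_right (by linarith), abs_of_nonneg (by nlinarith), div_mul_div_comm,
        div_mul_eq_mul_div, div_le_one (by positivity)]
      nlinarith [sq_nonneg (q ^ 2 - 1)]
    · rw [max_eq_left (by linarith), abs_of_nonpos (by nlinarith)]
      rcases le_or_gt (4 * q ^ 2) 3 with hq2 | hq2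
      · left
        rw [mul_div_assoc', le_div_iff₀ hd]
        linarith
      · right
        rw [div_mul_div_comm, mul_one, div_le_one (by positivity)]
        nlinarith [mul_pos (neg_pos.2 hq0) (by nlinarith : (0:ℝ) < 1 - q ^ 2)]

theorem eq_zero_of_tendsto_of_le_mul_or_mul_le_one {ι : Type*} {l : Filter ι} [l.NeBot]
    {u v : ι → ℝ} {a C : ℝ} (hu : Tendsto u l atTop) (hv : Tendsto v l (𝓝 a))
    (hv0 : ∀ i, 0 ≤ v i) (h : ∀ᶠ i in l, u i ≤ C * v i ∨ v i * u i ≤ 1) : a = 0 := by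
  have hv_lt : ∀ᶠ i in l, v i < a + 1 := hv.eventually (eventually_lt_nhds (lt_add_one a))
  have hv_le : ∀ᶠ i in l, v i ≤ 1 / u i := by
    filter_upwards [h, hv_lt, hu.eventually_gt_atTop (|C| * (a + 1)), hu.eventually_gt_atTop 0]
      with i hi hvi hCu hu0
    rcases hi with hi | hi
    · have : C * v i ≤ |C| * (a + 1) :=
        (mul_le_mul_of_nonneg_right (le_abs_self C) (hv0 i)).trans (by gcongr)
      linarith
    · rwa [le_div_iff₀ hu0]
  have ha_nonpos : a ≤ 0 := le_of_tendsto_of_tendsto hv (tendsto_const_nhds.div_atTop hu) hv_le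
  have ha_nonneg : 0 ≤ a := ge_of_tendsto hv (Eventually.of_forall hv0)
  exact le_antisymm ha_nonpos ha_nonneg

def mixedBroughton (z : ℂ × ℂ) : ℂ := z.1 * (1 + conj z.1 * z.2)

/-- The Milnor set `λ z = μ · conj (df z) + conj μ · d̄f z`, with `df = (1 + x̄y, |x|²)` and
`d̄f = (xy, 0)`. -/
def milnorSet : Set (ℂ × ℂ) :=
  {z | ∃ (lam : ℝ) (μ : ℂ), μ ≠ 0 ∧
    (lam : ℂ) * z.1 = μ * conj (1 + conj z.1 * z.2) + conj μ * (z.1 * z.2) ∧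
    (lam : ℂ) * z.2 = μ * conj (z.1 * conj z.1)}

theorem exists_real_mul_of_mem_milnorSet {z : ℂ × ℂ} (hz : z ∈ milnorSet) :
    ∃ q : ℝ, z.2 = q * z.1 ∧ q = ‖z.1‖ ^ 2 * (1 - 2 * q ^ 2) := by
  obtain ⟨x, y⟩ := z
  obtain ⟨lam, μ, hμ, h1, h2⟩ := hz
  dsimp only at h1 h2 ⊢
  set n : ℝ := ‖x‖ ^ 2
  have hn : x * conj x = n := by simp only [n, Complex.mul_conj', Complex.ofReal_pow]
  rw [hn, Complex.conj_ofReal] at h2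
  have hlam : (lam : ℂ) ≠ 0 := by
    rintro hlam
    have hx : x = 0 := by simpa [hlam, hμ, n] using h2
    simp only [hlam, hx, mul_zero, map_zero, zero_mul, add_zero, map_one, mul_one] at h1
    exact hμ h1.symm
  obtain ⟨c, rfl⟩ : ∃ c, μ = lam * c := ⟨μ / lam, by field_simp⟩
  have hy : y = c * n := mul_left_cancel₀ hlam (by linear_combination h2)
  have hx : x = c + 2 * (c * conj c) * n * x := by
    apply mul_left_cancel₀ hlam
    rw [h1, hy]
    simp only [map_add, map_mul, map_one, Complex.conj_conj, Complex.conj_ofReal]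
    ring
  set s : ℝ := 1 - 2 * ‖c‖ ^ 2 * n
  have hc : c = s * x := by
    push_cast [s]
    rw [← Complex.mul_conj']
    linear_combination -hx
  have hnc : ‖c‖ ^ 2 = s ^ 2 * n := by
    rw [hc, norm_mul, Complex.norm_real, Real.norm_eq_abs, mul_pow, sq_abs]
  refine ⟨n * s, by rw [hy, hc]; push_cast; ring, ?_⟩
  linear_combination (-2 * n * n) * hnc

theorem norm_le_two_mul_or_mul_le_one_of_mem_milnorSet {z : ℂ × ℂ} (hz : z ∈ milnorSet) :
    ‖z‖ ≤ 2 * ‖mixedBroughton z‖ ∨ ‖mixedBroughton z‖ * ‖z‖ ≤ 1 := by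
  obtain ⟨x, y⟩ := z
  obtain ⟨q, hy, hq⟩ := exists_real_mul_of_mem_milnorSet hz
  dsimp only at hy hq
  subst hy
  have hz_norm : ‖(x, q * x)‖ = ‖x‖ * max 1 |q| := by
    rw [Prod.norm_mk, norm_mul, Complex.norm_real, Real.norm_eq_abs,
      mul_max_of_nonneg _ _ (norm_nonneg x), mul_one, mul_comm]
  have hf_norm : ‖mixedBroughton (x, q * x)‖ = ‖x‖ * |1 + q * ‖x‖ ^ 2| := by
    have h : 1 + conj x * (q * x) = ((1 + q * ‖x‖ ^ 2 : ℝ) : ℂ) := by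
      push_cast
      rw [← Complex.conj_mul']
      ring
    rw [mixedBroughton, h, norm_mul, Complex.norm_real, Real.norm_eq_abs]
  rw [hz_norm, hf_norm]
  rcases max_one_abs_le_or_mul_le_one (sq_nonneg ‖x‖) hq with h | h
  · left
    calc ‖x‖ * max 1 |q| ≤ ‖x‖ * (2 * |1 + q * ‖x‖ ^ 2|) := by gcongr
      _ = 2 * (‖x‖ * |1 + q * ‖x‖ ^ 2|) := by ring
  · right
    calc ‖x‖ * |1 + q * ‖x‖ ^ 2| * (‖x‖ * max 1 |q|)
        = ‖x‖ ^ 2 * |1 + q * ‖x‖ ^ 2| * max 1 |q| := by ring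
      _ ≤ 1 := h

/-- For the mixed polynomial `f(x,y) = x(1 + x̄y)` on `ℂ²`, the set of
asymptotic ρ-nonregular values satisfies `S(f) ⊆ {0}`: for every sequence `z_j` in the
Milnor set `M(f) = { z : ∃ λ ∈ ℝ, μ ∈ ℂ*, λz = μ·conj(df)(z) + conj(μ)·d̄f(z) }` with
`‖z_j‖ → ∞` and `f(z_j) → t₀`, necessarily `t₀ = 0`.
Here `df = (1 + x̄y, |x|² = x·x̄)` and `d̄f = (xy, 0)`. -/
theorem asymptotic_nonregular_values_of_mixed_broughton :
    ∀ t₀ : ℂ,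
      (∃ z : ℕ → ℂ × ℂ,
        (∀ j, ∃ (lam : ℝ) (μ : ℂ), μ ≠ 0 ∧
          (lam : ℂ) * (z j).1
            = μ * conj (1 + conj (z j).1 * (z j).2) + conj μ * ((z j).1 * (z j).2) ∧
          (lam : ℂ) * (z j).2 = μ * conj ((z j).1 * conj (z j).1)) ∧
        Tendsto (fun j => ‖z j‖) atTop atTop ∧
        Tendsto (fun j => (z j).1 * (1 + conj (z j).1 * (z j).2)) atTop (nhds t₀)) →
      t₀ = 0 := by
  intro t₀ ⟨z, hM, hnorm, hf⟩
  have hf_bound : ∀ j, ‖z j‖ ≤ 2 * ‖mixedBroughton (z j)‖ ∨ ‖mixedBroughton (z j)‖ * ‖z j‖ ≤ 1 :=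
    fun j => norm_le_two_mul_or_mul_le_one_of_mem_milnorSet (hM j)
  exact norm_eq_zero.mp <| eq_zero_of_tendsto_of_le_mul_or_mul_le_one hnorm hf.norm
    (fun _ => norm_nonneg _) (Eventually.of_forall hf_bound)
end
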